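/- arXiv:2210.02098 — 4 statements merged into one kernel-verified Lean document; each statement's English description precedes it below -/
import Mathlib

section
/- Under the same hypotheses (F with right endpoint M, left derivative F'(M-) > 0, L(n) → F'(M-)) and for positive scalings aₙ with aₙ → 0 and aₙ·n → ∞: for every closed set C ⊂ (-∞, 0] not containing 0, limsup_{n→∞} aₙ log P( aₙ n L(n)(Zₙ - M) ∈ C ) ≤ sup C, where sup C < 0. -/
/-!
The supremum `s` of `C` lies in `C`, so `s < 0`, and `C ⊆ (-∞, s]`. With `tₙ = aₙ n L(n) → ∞`, the
event `tₙ (Zₙ - M) ∈ C` forces `Zₙ ≤ xₙ := M + s / tₙ`, which by independence has probability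
`F(xₙ)ⁿ`. Since `F M = 1`, `log F` has left derivative `d` at `M`, so `log F(xₙ) ~ d s / tₙ` and
`aₙ n log F(xₙ) → s`.
-/

open MeasureTheory Set Filter Topology

/-- `maxFirst W n ω = max {W 0 ω, …, W (n-1) ω}` for `n ≥ 1` (junk value `W 0 ω` for `n = 0`). -/
noncomputable def maxFirst {Ω : Type*} (W : ℕ → Ω → ℝ) : ℕ → Ω → ℝ
  | 0, ω => W 0 ω
  | n + 1, ω => max (maxFirst W n ω) (W n ω)

lemma maxFirst_le_iff {Ω : Type*} (W : ℕ → Ω → ℝ) {n : ℕ} (hn : n ≠ 0) (ω : Ω) (y : ℝ) :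
    maxFirst W n ω ≤ y ↔ ∀ i < n, W i ω ≤ y := by
  induction n with
  | zero => exact absurd rfl hn
  | succ m ih =>
    rcases eq_or_ne m 0 with rfl | hm
    · simp [maxFirst]
    · simp only [maxFirst, max_le_iff, ih hm, Nat.forall_lt_succ_right]

section IID

variable {Ω : Type*} [MeasurableSpace Ω] {P : Measure Ω} {W : ℕ → Ω → ℝ} {μ : Measure ℝ}

lemma measure_maxFirst_le (hmeas : ∀ i, Measurable (W i))
    (hindep : ProbabilityTheory.iIndepFun W P) (hdist : ∀ i, Measure.map (W i) P = μ)
    {n : ℕ} (hn : n ≠ 0) (y : ℝ) :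
    P {ω | maxFirst W n ω ≤ y} = μ (Iic y) ^ n := by
  have hset : {ω | maxFirst W n ω ≤ y} = ⋂ i ∈ Finset.range n, W i ⁻¹' Iic y := by
    ext ω
    simp [maxFirst_le_iff W hn]
  have hlaw : ∀ i, P (W i ⁻¹' Iic y) = μ (Iic y) := fun i => by
    rw [← hdist i, Measure.map_apply (hmeas i) measurableSet_Iic]
  rw [hset, hindep.measure_inter_preimage_eq_mul _ fun _ _ => measurableSet_Iic]
  simp [hlaw]

lemma mul_log_measure_le_of_subset_maxFirst_le (hmeas : ∀ i, Measurable (W i))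
    (hindep : ProbabilityTheory.iIndepFun W P) (hdist : ∀ i, Measure.map (W i) P = μ)
    {n : ℕ} (hn : n ≠ 0) {c y : ℝ} (hc : 0 ≤ c) (hy : 0 < (μ (Iic y)).toReal)
    {E : Set Ω} (hE : E ⊆ {ω | maxFirst W n ω ≤ y}) :
    (c : EReal) * ENNReal.log (P E) ≤ ((c * n * Real.log (μ (Iic y)).toReal : ℝ) : EReal) := by
  have hPE : P E ≤ μ (Iic y) ^ n := measure_maxFirst_le hmeas hindep hdist hn y ▸ measure_mono hE
  calc (c : EReal) * ENNReal.log (P E)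
      ≤ c * ENNReal.log (μ (Iic y) ^ n) :=
        mul_le_mul_of_nonneg_left (ENNReal.log_monotone hPE) (EReal.coe_nonneg.2 hc)
    _ = ((c * n * Real.log (μ (Iic y)).toReal : ℝ) : EReal) := by
        rw [ENNReal.log_pow, ENNReal.log_pos_real' hy, ← EReal.coe_coe_eq_natCast,
          ← EReal.coe_mul, ← EReal.coe_mul, mul_assoc]

end IID

lemma tendsto_mul_log_of_hasDerivWithinAt {ι : Type*} {l : Filter ι} {F : ℝ → ℝ} {M d c : ℝ}
    (hFM : F M = 1) (hderiv : HasDerivWithinAt F d (Iio M) M) {x r : ι → ℝ}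
    (hx : Tendsto x l (𝓝[<] M)) (hr : Tendsto (fun i => r i * (x i - M)) l (𝓝 c)) :
    Tendsto (fun i => r i * Real.log (F (x i))) l (𝓝 (c * d)) := by
  have hlog : HasDerivWithinAt (fun y => Real.log (F y)) d (Iio M) M := by
    simpa [hFM] using hderiv.log (by simp [hFM])
  have hslope : Tendsto (fun i => Real.log (F (x i)) / (x i - M)) l (𝓝 d) := by
    have h := hasDerivWithinAt_iff_tendsto_slope.1 hlog
    rw [sdiff_singleton_eq_self self_notMem_Iio] at h
    refine (h.comp hx).congr fun i => ?_
    simp [slope_def_field, hFM]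
  refine (hr.mul hslope).congr' ?_
  filter_upwards [(tendsto_nhdsWithin_iff.1 hx).2] with i hi
  have : x i - M ≠ 0 := sub_ne_zero.2 (ne_of_lt hi)
  field_simp

theorem stmt_7_general {Ω : Type*} [MeasurableSpace Ω] (P : Measure Ω)
    (W : ℕ → Ω → ℝ) (μ : Measure ℝ)
    (hmeas : ∀ i, Measurable (W i))
    (hindep : ProbabilityTheory.iIndepFun W P)
    (hdist : ∀ i, Measure.map (W i) P = μ)
    (M : ℝ) (F : ℝ → ℝ) (hF : ∀ x, F x = (μ (Iic x)).toReal) (hFM : F M = 1)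
    (d : ℝ) (hd : 0 < d) (hderiv : HasDerivWithinAt F d (Iio M) M)
    (L : ℕ → ℝ) (hL : Tendsto L atTop (nhds d))
    (a : ℕ → ℝ) (ha_pos : ∀ n, 0 < a n)
    (han : Tendsto (fun n : ℕ => a n * n) atTop atTop)
    (C : Set ℝ) (hC_closed : IsClosed C) (hC_sub : C ⊆ Iic 0) (hC0 : (0 : ℝ) ∉ C)
    (hC_ne : C.Nonempty) :
    limsup (fun n : ℕ =>
        ((a n : ℝ) : EReal) *
          ENNReal.log (P {ω | a n * n * L n * (maxFirst W n ω - M) ∈ C})) atTop ≤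
        ((sSup C : ℝ) : EReal) ∧
      sSup C < 0 := by
  have hbdd : BddAbove C := ⟨0, fun y hy => hC_sub hy⟩
  have hs_mem : sSup C ∈ C := hC_closed.csSup_mem hC_ne hbdd
  have hs_neg : sSup C < 0 := (hC_sub hs_mem).lt_of_ne fun h => hC0 (h ▸ hs_mem)
  refine ⟨?_, hs_neg⟩
  set s := sSup C
  set t : ℕ → ℝ := fun n => a n * n * L n
  have ht : Tendsto t atTop atTop := han.atTop_mul_pos hd hL
  set x : ℕ → ℝ := fun n => M + s / t n
  have hx : Tendsto x atTop (𝓝[<] M) := tendsto_nhdsWithin_iff.2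
    ⟨by simpa using tendsto_const_nhds.add (tendsto_const_nhds.div_atTop ht),
      (ht.eventually_gt_atTop 0).mono fun n hn => by simpa [x] using div_neg_of_neg_of_pos hs_neg hn⟩
  have hrate : Tendsto (fun n => a n * n * Real.log (F (x n))) atTop (𝓝 s) := by
    have hr : Tendsto (fun n => a n * n * (x n - M)) atTop (𝓝 (s / d)) := by
      refine (tendsto_const_nhds.div hL hd.ne').congr' ?_
      filter_upwards [hL.eventually (eventually_gt_nhds hd), eventually_ne_atTop 0] with n hLn hn
      have := (ha_pos n).ne'
      simp only [x, t, add_sub_cancel_left, Pi.div_apply]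
      field_simp
    simpa [div_mul_cancel₀ _ hd.ne'] using tendsto_mul_log_of_hasDerivWithinAt hFM hderiv hx hr
  have hFx : ∀ᶠ n in atTop, 0 < F (x n) :=
    (hFM ▸ hderiv.continuousWithinAt.tendsto.comp hx).eventually (eventually_gt_nhds one_pos)
  have hbound : ∀ᶠ n in atTop,
      ((a n : ℝ) : EReal) * ENNReal.log (P {ω | a n * n * L n * (maxFirst W n ω - M) ∈ C}) ≤
        ((a n * n * Real.log (F (x n)) : ℝ) : EReal) := by
    filter_upwards [ht.eventually_gt_atTop 0, hFx, eventually_ne_atTop 0] with n htn hFn hn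
    rw [hF] at hFn ⊢
    refine mul_log_measure_le_of_subset_maxFirst_le hmeas hindep hdist hn (ha_pos n).le hFn ?_
    intro ω hω
    have hle : t n * (maxFirst W n ω - M) ≤ s := le_csSup hbdd hω
    change maxFirst W n ω ≤ M + s / t n
    rw [← sub_le_iff_le_add', le_div_iff₀ htn, mul_comm]
    exact hle
  calc limsup _ atTop
      ≤ limsup (fun n => ((a n * n * Real.log (F (x n)) : ℝ) : EReal)) atTop :=
        limsup_le_limsup hbound
    _ = s := ((continuous_coe_real_ereal.tendsto s).comp hrate).limsup_eq

theorem stmt_7 {Ω : Type*} [MeasurableSpace Ω] (P : Measure Ω) [IsProbabilityMeasure P]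
    (W : ℕ → Ω → ℝ) (μ : Measure ℝ) [IsProbabilityMeasure μ]
    (hmeas : ∀ i, Measurable (W i))
    (hindep : ProbabilityTheory.iIndepFun W P)
    (hdist : ∀ i, Measure.map (W i) P = μ)
    (M : ℝ) (F : ℝ → ℝ) (hF : ∀ x, F x = (μ (Iic x)).toReal) (hFM : F M = 1)
    (d : ℝ) (hd : 0 < d) (hderiv : HasDerivWithinAt F d (Iio M) M)
    (L : ℕ → ℝ) (hL : Tendsto L atTop (nhds d))
    (a : ℕ → ℝ) (ha_pos : ∀ n, 0 < a n) (ha0 : Tendsto a atTop (nhds 0))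
    (han : Tendsto (fun n : ℕ => a n * n) atTop atTop)
    (C : Set ℝ) (hC_closed : IsClosed C) (hC_sub : C ⊆ Iic 0) (hC0 : (0 : ℝ) ∉ C)
    (hC_ne : C.Nonempty) :
    limsup (fun n : ℕ =>
        ((a n : ℝ) : EReal) *
          ENNReal.log (P {ω | a n * n * L n * (maxFirst W n ω - M) ∈ C})) atTop ≤
        ((sSup C : ℝ) : EReal) ∧
      sSup C < 0 :=
  stmt_7_general P W μ hmeas hindep hdist M F hF hFM d hd hderiv L hL a ha_pos han C hC_closed
    hC_sub hC0 hC_ne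
end

section
/- Let (πₙ) be a sequence of Borel probability measures on a Polish space satisfying the full LDP with speed sₙ → ∞ and good rate function I that vanishes only at a point r₀. Let tₙ → ∞ be another speed with sₙ/tₙ → ∞. Then (πₙ) satisfies the LDP with speed tₙ and good rate function Δ(r; r₀) which equals 0 at r = r₀ and +∞ elsewhere. -/
open MeasureTheory Filter Classical

/-- `π` satisfies the large deviation principle with speed `v` and rate function `I`. -/
def SatisfiesLDP {X : Type*} [TopologicalSpace X] [MeasurableSpace X]
    (π : ℕ → Measure X) (v : ℕ → ℝ) (I : X → EReal) : Prop :=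
  LowerSemicontinuous I ∧ (∀ x, 0 ≤ I x) ∧
  (∀ O : Set X, IsOpen O →
    -(⨅ x ∈ O, I x) ≤ liminf (fun n => (((v n)⁻¹ : ℝ) : EReal) * ENNReal.log (π n O)) atTop) ∧
  (∀ C : Set X, IsClosed C →
    limsup (fun n => (((v n)⁻¹ : ℝ) : EReal) * ENNReal.log (π n C)) atTop ≤ -(⨅ x ∈ C, I x))

/-- A rate function is good if all of its level sets are compact. -/
def GoodRate {X : Type*} [TopologicalSpace X] (I : X → EReal) : Prop :=
  ∀ η : ℝ, IsCompact {x | I x ≤ (η : EReal)}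

lemma aux_pos_inf {X : Type*} [TopologicalSpace X] [T2Space X] {I : X → EReal}
    (hgood : GoodRate I) (hnn : ∀ x, 0 ≤ I x) {r₀ : X} (hzero : ∀ x, I x = 0 ↔ x = r₀)
    {C : Set X} (hC : IsClosed C) (hr : r₀ ∉ C) :
    ∃ c : ℝ, 0 < c ∧ (c : EReal) ≤ ⨅ x ∈ C, I x := by
  by_contra h
  push_neg at h
  set K : ℕ → Set X := fun n => C ∩ {x | I x ≤ ((1 / (n + 1) : ℝ) : EReal)} with hK
  have hKne : ∀ n, (K n).Nonempty := by
    intro n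
    have h1 : (0:ℝ) < 1 / (n+1) := by positivity
    have h2 := h _ h1
    rw [iInf_lt_iff] at h2; obtain ⟨x, hx⟩ := h2
    rw [iInf_lt_iff] at hx; obtain ⟨hxC, hx⟩ := hx
    exact ⟨x, hxC, hx.le⟩
  have hKcl : ∀ n, IsClosed (K n) := fun n => hC.inter (hgood _).isClosed
  have hKsub : ∀ n, K (n+1) ⊆ K n := by
    intro n x hx
    simp only [hK, Set.mem_inter_iff, Set.mem_setOf_eq] at hx ⊢
    refine ⟨hx.1, le_trans hx.2 ?_⟩
    have h12 : (1 / ((n:ℝ) + 1 + 1) : ℝ) ≤ 1 / ((n:ℝ) + 1) := by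
      apply one_div_le_one_div_of_le <;> [positivity; linarith]
    apply EReal.coe_le_coe_iff.2
    push_cast
    linarith [h12]
  obtain ⟨x, hx⟩ := IsCompact.nonempty_iInter_of_sequence_nonempty_isCompact_isClosed K hKsub
    hKne ((hgood _).inter_left hC) hKcl
  simp only [Set.mem_iInter] at hx
  have hxC : x ∈ C := (hx 0).1
  have hI0 : I x ≤ 0 := by
    have htend : Tendsto (fun n : ℕ => ((1 / (n + 1) : ℝ) : EReal)) atTop (nhds (0 : EReal)) := by
      rw [← EReal.coe_zero]
      exact EReal.tendsto_coe.2 tendsto_one_div_add_atTop_nhds_zero_nat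
    exact ge_of_tendsto htend (Eventually.of_forall fun n => (hx n).2)
  have hxr : x = r₀ := (hzero x).1 (le_antisymm hI0 (hnn x))
  exact hr (hxr ▸ hxC)

theorem stmt_10 {X : Type*} [TopologicalSpace X] [PolishSpace X] [MeasurableSpace X]
    [BorelSpace X] (π : ℕ → Measure X) [∀ n, IsProbabilityMeasure (π n)]
    (s t : ℕ → ℝ) (hs : Tendsto s atTop atTop) (ht : Tendsto t atTop atTop)
    (hst : Tendsto (fun n => s n / t n) atTop atTop)
    (I : X → EReal) (hLDP : SatisfiesLDP π s I) (hgood : GoodRate I)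
    (r₀ : X) (hzero : ∀ x, I x = 0 ↔ x = r₀) :
    SatisfiesLDP π t (fun x => if x = r₀ then (0 : EReal) else ⊤) ∧
      GoodRate (fun x : X => if x = r₀ then (0 : EReal) else ⊤) := by
  obtain ⟨hlsc, hnn, hlow, hupp⟩ := hLDP
  set J : X → EReal := fun x => if x = r₀ then (0 : EReal) else ⊤ with hJ
  have hJnn : ∀ x, 0 ≤ J x := by
    intro x; by_cases hx : x = r₀ <;> simp [hJ, hx]
  have hs' : ∀ᶠ n in atTop, 0 < s n := hs.eventually_gt_atTop 0
  have ht' : ∀ᶠ n in atTop, 0 < t n := ht.eventually_gt_atTop 0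
  -- Key estimate for closed sets avoiding r₀
  have keyC : ∀ C : Set X, IsClosed C → r₀ ∉ C → ∃ c : ℝ, 0 < c ∧
      ∀ᶠ n in atTop, ENNReal.log (π n C) ≤ (((-c) * s n : ℝ) : EReal) := by
    intro C hC hr
    obtain ⟨c, hc, hinf⟩ := aux_pos_inf hgood hnn hzero hC hr
    refine ⟨c / 2, by linarith, ?_⟩
    have h1 : -(⨅ x ∈ C, I x) ≤ ((-c : ℝ) : EReal) := by
      rw [EReal.coe_neg]
      exact EReal.neg_le_neg_iff.2 hinf
    have h2 : ((-c : ℝ) : EReal) < ((-(c/2) : ℝ) : EReal) :=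
      EReal.coe_lt_coe_iff.2 (by linarith)
    have hlim : limsup (fun n => (((s n)⁻¹ : ℝ) : EReal) * ENNReal.log (π n C)) atTop
        < ((-(c/2) : ℝ) : EReal) := lt_of_le_of_lt (le_trans (hupp C hC) h1) h2
    filter_upwards [eventually_lt_of_limsup_lt hlim, hs'] with n hn hsn
    have hmul : ((s n : ℝ) : EReal) * ((((s n)⁻¹ : ℝ) : EReal) * ENNReal.log (π n C))
        = ENNReal.log (π n C) := by
      rw [← mul_assoc, ← EReal.coe_mul, mul_inv_cancel₀ hsn.ne', EReal.coe_one, one_mul]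
    calc ENNReal.log (π n C)
        = ((s n : ℝ) : EReal) * ((((s n)⁻¹ : ℝ) : EReal) * ENNReal.log (π n C)) := hmul.symm
      _ ≤ ((s n : ℝ) : EReal) * ((-(c/2) : ℝ) : EReal) :=
          mul_le_mul_of_nonneg_left hn.le (by exact_mod_cast hsn.le)
      _ = (((-(c/2)) * s n : ℝ) : EReal) := by rw [← EReal.coe_mul, mul_comm]
  -- lower semicontinuity of J
  have hJlsc : LowerSemicontinuous J := by
    intro x y hy
    by_cases hx : x = r₀
    · refine Eventually.of_forall fun z => lt_of_lt_of_le ?_ (hJnn z)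
      simpa [hJ, hx] using hy
    · have : IsOpen ({r₀}ᶜ : Set X) := isClosed_singleton.isOpen_compl
      filter_upwards [this.mem_nhds (by simpa using hx)] with z hz
      have : J z = ⊤ := if_neg (by simpa using hz)
      rw [this]
      exact lt_of_lt_of_le hy (by simp [hJ, hx])
  -- goodness of J
  have hJgood : GoodRate J := by
    intro η
    by_cases hη : (0 : EReal) ≤ (η : EReal)
    · have : {x | J x ≤ (η : EReal)} = {r₀} := by
        ext x
        by_cases hx : x = r₀ <;> simp [hJ, hx, hη]
      rw [this]; exact isCompact_singleton
    · have hset : {x | J x ≤ (η : EReal)} = ∅ := by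
        ext x
        simp only [Set.mem_setOf_eq, Set.mem_empty_iff_false, iff_false]
        intro h
        by_cases hx : x = r₀
        · exact hη (le_trans (by simp [hJ, hx]) h)
        · simp [hJ, hx] at h
      rw [hset]; exact isCompact_empty
  refine ⟨⟨hJlsc, hJnn, ?_, ?_⟩, hJgood⟩
  · -- lower bound for open sets
    intro O hO
    by_cases hr : r₀ ∈ O
    · have hinf : (⨅ x ∈ O, J x) = 0 := by
        refine le_antisymm (le_trans (iInf₂_le r₀ hr) (by simp [hJ])) (le_iInf₂ fun x _ => hJnn x)
      rw [hinf, neg_zero]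
      obtain ⟨c, hc, hev⟩ := keyC Oᶜ (isClosed_compl_iff.2 hO) (by simpa using hr)
      -- eventually π n O ≥ 1/2
      have hhalf : ∀ᶠ n in atTop, ENNReal.ofReal (1/2) ≤ π n O := by
        have hsev : ∀ᶠ n in atTop, Real.log (1/2) ≥ (-c) * s n := by
          filter_upwards [hs.eventually_ge_atTop ((- Real.log (1/2)) / c)] with n hn
          have : -Real.log (1/2) ≤ c * s n := by
            rw [div_le_iff₀ hc] at hn; linarith [hn]
          linarith
        filter_upwards [hev, hsev] with n hn hsn
        have hlog : ENNReal.log (π n Oᶜ) ≤ ENNReal.log (ENNReal.ofReal (1/2)) := by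
          rw [ENNReal.log_ofReal_of_pos (by norm_num)]
          exact le_trans hn (by exact_mod_cast EReal.coe_le_coe_iff.2 hsn)
        have hcompl : π n Oᶜ ≤ ENNReal.ofReal (1/2) := ENNReal.log_le_log_iff.1 hlog
        have hO1 : π n O = 1 - π n Oᶜ := by
          rw [← prob_compl_eq_one_sub hO.measurableSet.compl, compl_compl]
        rw [hO1]
        have h12 : (1:ENNReal) - ENNReal.ofReal (1/2) = ENNReal.ofReal (1/2) := by
          rw [ENNReal.ofReal_div_of_pos] <;> norm_num
        calc ENNReal.ofReal (1/2) = 1 - ENNReal.ofReal (1/2) := h12.symm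
          _ ≤ 1 - π n Oᶜ := tsub_le_tsub_left hcompl 1
      -- so (t n)⁻¹ * log π n O ≥ (t n)⁻¹ * log (1/2) → 0
      have hglim : Tendsto (fun n => (((t n)⁻¹ * Real.log (1/2) : ℝ) : EReal)) atTop
          (nhds (0 : EReal)) := by
        rw [← EReal.coe_zero]
        apply EReal.tendsto_coe.2
        simpa using (ht.inv_tendsto_atTop).mul_const (Real.log (1/2))
      have hle : ∀ᶠ n in atTop, (((t n)⁻¹ * Real.log (1/2) : ℝ) : EReal)
          ≤ (((t n)⁻¹ : ℝ) : EReal) * ENNReal.log (π n O) := by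
        filter_upwards [hhalf, ht'] with n hn htn
        have hlg : ((Real.log (1/2) : ℝ) : EReal) ≤ ENNReal.log (π n O) := by
          rw [← ENNReal.log_ofReal_of_pos (by norm_num : (0:ℝ) < 1/2)]
          exact ENNReal.log_le_log_iff.2 hn
        calc (((t n)⁻¹ * Real.log (1/2) : ℝ) : EReal)
            = (((t n)⁻¹ : ℝ) : EReal) * ((Real.log (1/2) : ℝ) : EReal) := EReal.coe_mul _ _
          _ ≤ (((t n)⁻¹ : ℝ) : EReal) * ENNReal.log (π n O) :=
              mul_le_mul_of_nonneg_left hlg (by exact_mod_cast (inv_nonneg.2 htn.le))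
      calc (0 : EReal) = liminf (fun n => (((t n)⁻¹ * Real.log (1/2) : ℝ) : EReal)) atTop :=
            (hglim.liminf_eq).symm
        _ ≤ liminf (fun n => (((t n)⁻¹ : ℝ) : EReal) * ENNReal.log (π n O)) atTop :=
            liminf_le_liminf hle
    · have hinf : (⨅ x ∈ O, J x) = ⊤ := by
        rw [iInf_eq_top]; intro x
        rw [iInf_eq_top]; intro hx
        exact if_neg (by rintro rfl; exact hr hx)
      rw [hinf, EReal.neg_top]
      exact bot_le
  · -- upper bound for closed sets
    intro C hC
    by_cases hr : r₀ ∈ C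
    · have hinf : (⨅ x ∈ C, J x) = 0 :=
        le_antisymm (le_trans (iInf₂_le r₀ hr) (by simp [hJ])) (le_iInf₂ fun x _ => hJnn x)
      rw [hinf, neg_zero]
      have hle : ∀ᶠ n in atTop, (((t n)⁻¹ : ℝ) : EReal) * ENNReal.log (π n C)
          ≤ (0 : EReal) := by
        filter_upwards [ht'] with n htn
        have h1 : ENNReal.log (π n C) ≤ 0 := ENNReal.log_le_zero_iff.2 prob_le_one
        calc (((t n)⁻¹ : ℝ) : EReal) * ENNReal.log (π n C)
            ≤ (((t n)⁻¹ : ℝ) : EReal) * 0 :=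
              mul_le_mul_of_nonneg_left h1 (by exact_mod_cast (inv_nonneg.2 htn.le))
          _ = 0 := mul_zero _
      calc limsup (fun n => (((t n)⁻¹ : ℝ) : EReal) * ENNReal.log (π n C)) atTop
          ≤ limsup (fun _ => (0 : EReal)) atTop := limsup_le_limsup hle
        _ = 0 := limsup_const _
    · have hinf : (⨅ x ∈ C, J x) = ⊤ := by
        rw [iInf_eq_top]; intro x
        rw [iInf_eq_top]; intro hx
        exact if_neg (by rintro rfl; exact hr hx)
      rw [hinf]
      obtain ⟨c, hc, hev⟩ := keyC C hC hr
      have hle : ∀ᶠ n in atTop, (((t n)⁻¹ : ℝ) : EReal) * ENNReal.log (π n C)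
          ≤ (((-c) * (s n / t n) : ℝ) : EReal) := by
        filter_upwards [hev, ht'] with n hn htn
        calc (((t n)⁻¹ : ℝ) : EReal) * ENNReal.log (π n C)
            ≤ (((t n)⁻¹ : ℝ) : EReal) * (((-c) * s n : ℝ) : EReal) :=
              mul_le_mul_of_nonneg_left hn (by exact_mod_cast (inv_nonneg.2 htn.le))
          _ = (((-c) * (s n / t n) : ℝ) : EReal) := by
              rw [← EReal.coe_mul]; congr 1; rw [div_eq_mul_inv]; ring
      have htend : Tendsto (fun n => (((-c) * (s n / t n) : ℝ) : EReal)) atTop (nhds (⊥ : EReal)) := by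
        have h1 : Tendsto (fun n => (-c) * (s n / t n)) atTop atBot :=
          hst.const_mul_atTop_of_neg (by linarith)
        rw [EReal.tendsto_nhds_bot_iff_real]
        intro x
        filter_upwards [h1.eventually_lt_atBot x] with n hn
        exact_mod_cast EReal.coe_lt_coe_iff.2 hn
      calc limsup (fun n => (((t n)⁻¹ : ℝ) : EReal) * ENNReal.log (π n C)) atTop
          ≤ limsup (fun n => (((-c) * (s n / t n) : ℝ) : EReal)) atTop := limsup_le_limsup hle
        _ = ⊥ := htend.limsup_eq
        _ = -⊤ := by simp
end

section
/- Let (πₙ) be probability measures on a Polish space satisfying the full LDP with speed sₙ and good rate function I. Then (πₙ) is exponentially tight with respect to sₙ: for every b > 0 there is a compact set K_b with limsup_{n→∞} (1/sₙ) log πₙ(K_b^c) ≤ -b. -/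
open MeasureTheory Filter

/-!
For every radius `1/(m+1)`, cover the compact level set `{I ≤ b + m + 2}` by finitely many
balls; by the LDP upper bound the complement of their union has mass at most
`exp (-sₙ (b + m + 1))` for large `n`, and finitely many further balls, from the tightness of
each single measure on a Polish space, take care of the remaining `n`. The intersection over `m`
of these finite unions of closed balls is closed and totally bounded, hence compact, and its
complement has mass at most `∑ₘ exp (-sₙ (b + m + 1)) ≤ exp (-sₙ b)` as soon as `sₙ ≥ 1`.
-/

open Metric Set ENNReal Topology

def SatisfiesLDPUpperBound {X : Type*} [TopologicalSpace X] [MeasurableSpace X]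
    (π : ℕ → Measure X) (v : ℕ → ℝ) (I : X → EReal) : Prop :=
  ∀ C : Set X, IsClosed C →
    limsup (fun n => (((v n)⁻¹ : ℝ) : EReal) * ENNReal.log (π n C)) atTop ≤ -(⨅ x ∈ C, I x)

lemma SatisfiesLDP.upperBound {X : Type*} [TopologicalSpace X] [MeasurableSpace X]
    {π : ℕ → Measure X} {v : ℕ → ℝ} {I : X → EReal} (h : SatisfiesLDP π v I) :
    SatisfiesLDPUpperBound π v I :=
  h.2.2.2

lemma inv_mul_log_le_iff_le_ofReal_exp {s : ℝ} (hs : 0 < s) (x : ℝ≥0∞) (c : ℝ) :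
    ((s⁻¹ : ℝ) : EReal) * ENNReal.log x ≤ c ↔ x ≤ ENNReal.ofReal (Real.exp (s * c)) := by
  rw [← ENNReal.log_le_log_iff, ENNReal.log_ofReal_of_pos (Real.exp_pos _), Real.log_exp,
    EReal.coe_inv, EReal.mul_comm, ← div_eq_mul_inv, EReal.div_le_iff_le_mul
      (by exact_mod_cast hs) (EReal.coe_ne_top s), EReal.coe_mul]

section RateBounds

variable {s : ℕ → ℝ} {x : ℕ → ℝ≥0∞} {c : ℝ}

lemma eventually_le_ofReal_exp_of_limsup_lt (hs : Tendsto s atTop atTop)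
    (h : limsup (fun n => (((s n)⁻¹ : ℝ) : EReal) * ENNReal.log (x n)) atTop < c) :
    ∀ᶠ n in atTop, x n ≤ ENNReal.ofReal (Real.exp (s n * c)) := by
  filter_upwards [eventually_lt_of_limsup_lt h, hs.eventually_gt_atTop 0] with n hn hsn
  exact (inv_mul_log_le_iff_le_ofReal_exp hsn _ _).1 hn.le

lemma limsup_le_of_eventually_le_ofReal_exp (hs : Tendsto s atTop atTop)
    (h : ∀ᶠ n in atTop, x n ≤ ENNReal.ofReal (Real.exp (s n * c))) :
    limsup (fun n => (((s n)⁻¹ : ℝ) : EReal) * ENNReal.log (x n)) atTop ≤ c := by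
  refine limsup_le_of_le (by isBoundedDefault) ?_
  filter_upwards [h, hs.eventually_gt_atTop 0] with n hn hsn
  exact (inv_mul_log_le_iff_le_ofReal_exp hsn _ _).2 hn

end RateBounds

lemma tsum_ofReal_exp_le {s : ℝ} (hs : 1 ≤ s) (b : ℝ) :
    ∑' m : ℕ, ENNReal.ofReal (Real.exp (s * -(b + m + 1)))
      ≤ ENNReal.ofReal (Real.exp (s * -b)) := by
  have hterm : ∀ m : ℕ, ENNReal.ofReal (Real.exp (s * -(b + m + 1)))
      ≤ ENNReal.ofReal (Real.exp (s * -b)) * 2⁻¹ ^ (m + 1) := by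
    intro m
    have hexp : Real.exp (-1) ≤ 2⁻¹ := by
      rw [Real.exp_neg]
      exact inv_anti₀ two_pos (by linarith [Real.add_one_le_exp 1])
    have hreal : Real.exp (s * -(b + m + 1)) ≤ Real.exp (s * -b) * 2⁻¹ ^ (m + 1) :=
      calc Real.exp (s * -(b + m + 1)) ≤ Real.exp (s * -b + (m + 1) * -1) :=
            Real.exp_le_exp.2 (by nlinarith)
        _ = Real.exp (s * -b) * Real.exp (-1) ^ (m + 1) := by
            rw [Real.exp_add, ← Real.exp_nat_mul]; push_cast; ring_nf
        _ ≤ Real.exp (s * -b) * 2⁻¹ ^ (m + 1) := by gcongr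
    calc ENNReal.ofReal (Real.exp (s * -(b + m + 1)))
        ≤ ENNReal.ofReal (Real.exp (s * -b) * 2⁻¹ ^ (m + 1)) := ENNReal.ofReal_le_ofReal hreal
      _ = ENNReal.ofReal (Real.exp (s * -b)) * 2⁻¹ ^ (m + 1) := by
        rw [ENNReal.ofReal_mul (Real.exp_pos _).le, ENNReal.ofReal_pow (by norm_num),
          ENNReal.ofReal_inv_of_pos two_pos, ENNReal.ofReal_ofNat]
  calc ∑' m : ℕ, ENNReal.ofReal (Real.exp (s * -(b + m + 1)))
      ≤ ∑' m : ℕ, ENNReal.ofReal (Real.exp (s * -b)) * 2⁻¹ ^ (m + 1) :=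
        ENNReal.tsum_le_tsum hterm
    _ = ENNReal.ofReal (Real.exp (s * -b)) := by
      rw [ENNReal.tsum_mul_left, ENNReal.tsum_geometric_add_one, ENNReal.one_sub_inv_two,
        inv_inv, ENNReal.inv_mul_cancel two_ne_zero ofNat_ne_top, mul_one]

section PseudoMetric

variable {X : Type*} [PseudoMetricSpace X]

lemma compl_biUnion_closedBall_anti {t t' : Finset X} (h : t ⊆ t') (r : ℝ) :
    (⋃ y ∈ t', closedBall y r)ᶜ ⊆ (⋃ y ∈ t, closedBall y r)ᶜ :=
  compl_subset_compl.2 (biUnion_subset_biUnion_left (Finset.coe_subset.2 h))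

lemma IsCompact.exists_finset_subset_biUnion_ball {K : Set X} (hK : IsCompact K) {r : ℝ}
    (hr : 0 < r) : ∃ t : Finset X, K ⊆ ⋃ y ∈ t, ball y r := by
  obtain ⟨t, -, ht⟩ := hK.elim_nhds_subcover (fun x => ball x r) (fun x _ => ball_mem_nhds x hr)
  exact ⟨t, ht⟩

lemma isCompact_iInter_biUnion_closedBall [CompleteSpace X] (T : ℕ → Finset X) {r : ℕ → ℝ}
    (hr : Tendsto r atTop (𝓝 0)) : IsCompact (⋂ m, ⋃ y ∈ T m, closedBall y (r m)) := by
  refine TotallyBounded.isCompact_of_isClosed (totallyBounded_iff.2 fun ε hε => ?_)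
    (isClosed_iInter fun m => isClosed_biUnion_finset fun y _ => isClosed_closedBall)
  obtain ⟨m, hm⟩ := (hr.eventually (gt_mem_nhds hε)).exists
  exact ⟨T m, (T m).finite_toSet, (iInter_subset _ m).trans
    (biUnion_mono subset_rfl fun y _ => closedBall_subset_ball hm)⟩

variable [MeasurableSpace X]

lemma exists_finset_measure_compl_biUnion_closedBall_lt [CompleteSpace X]
    [SecondCountableTopology X] [OpensMeasurableSpace X] (μ : Measure X) [IsFiniteMeasure μ]
    {r : ℝ} (hr : 0 < r) {ε : ℝ≥0∞} (hε : 0 < ε) :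
    ∃ t : Finset X, μ (⋃ y ∈ t, closedBall y r)ᶜ < ε := by
  obtain ⟨K, hK, hμK⟩ := exists_isCompact_closure_measure_compl_lt μ ε hε
  obtain ⟨t, ht⟩ := hK.exists_finset_subset_biUnion_ball hr
  refine ⟨t, (measure_mono (compl_subset_compl.2 ?_)).trans_lt hμK⟩
  exact subset_closure.trans
    (ht.trans (biUnion_mono subset_rfl fun y _ => ball_subset_closedBall))

lemma exists_finset_forall_measure_compl_biUnion_closedBall_le [CompleteSpace X]
    [SecondCountableTopology X] [OpensMeasurableSpace X] (μ : ℕ → Measure X)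
    [∀ n, IsFiniteMeasure (μ n)] {r : ℝ} (hr : 0 < r) {ε : ℕ → ℝ≥0∞} (hε : ∀ n, 0 < ε n)
    {t : Finset X} (ht : ∀ᶠ n in atTop, μ n (⋃ y ∈ t, closedBall y r)ᶜ ≤ ε n) :
    ∃ t' : Finset X, ∀ n, μ n (⋃ y ∈ t', closedBall y r)ᶜ ≤ ε n := by
  classical
  obtain ⟨n₀, hn₀⟩ := eventually_atTop.1 ht
  choose T hT using fun n => exists_finset_measure_compl_biUnion_closedBall_lt (μ n) hr (hε n)
  refine ⟨t ∪ (Finset.range n₀).biUnion T, fun n => ?_⟩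
  rcases le_or_gt n₀ n with hn | hn
  · exact (measure_mono (compl_biUnion_closedBall_anti Finset.subset_union_left r)).trans
      (hn₀ n hn)
  · refine (measure_mono (compl_biUnion_closedBall_anti ?_ r)).trans (hT n).le
    exact (Finset.subset_biUnion_of_mem T (Finset.mem_range.2 hn)).trans
      Finset.subset_union_right

lemma SatisfiesLDPUpperBound.exists_finset_eventually_measure_compl_le {π : ℕ → Measure X}
    {s : ℕ → ℝ} {I : X → EReal} (hLDP : SatisfiesLDPUpperBound π s I)
    (hs : Tendsto s atTop atTop) (hgood : GoodRate I) {r : ℝ} (hr : 0 < r) (a : ℝ) :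
    ∃ t : Finset X, ∀ᶠ n in atTop,
      π n (⋃ y ∈ t, closedBall y r)ᶜ ≤ ENNReal.ofReal (Real.exp (s n * -a)) := by
  obtain ⟨t, ht⟩ := (hgood (a + 1)).exists_finset_subset_biUnion_ball hr
  set U := ⋃ y ∈ t, ball y r
  have hinf : ((a + 1 : ℝ) : EReal) ≤ ⨅ x ∈ Uᶜ, I x :=
    le_iInf₂ fun x hx => not_lt.1 fun hxI => hx (ht (le_of_lt hxI))
  have hlimsup : limsup (fun n => (((s n)⁻¹ : ℝ) : EReal) * ENNReal.log (π n Uᶜ)) atTop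
      < ((-a : ℝ) : EReal) := by
    refine (hLDP _ (isOpen_biUnion fun y _ => isOpen_ball).isClosed_compl).trans_lt ?_
    calc -(⨅ x ∈ Uᶜ, I x) ≤ ((-(a + 1) : ℝ) : EReal) := by
          rw [EReal.coe_neg]; exact EReal.neg_le_neg_iff.2 hinf
      _ < ((-a : ℝ) : EReal) := by exact_mod_cast (by linarith : -(a + 1) < -a)
  refine ⟨t, (eventually_le_ofReal_exp_of_limsup_lt hs hlimsup).mono fun n hn =>
    (measure_mono (compl_subset_compl.2 ?_)).trans hn⟩
  exact biUnion_mono subset_rfl fun y _ => ball_subset_closedBall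

end PseudoMetric

theorem stmt_11 {X : Type*} [TopologicalSpace X] [PolishSpace X] [MeasurableSpace X]
    [BorelSpace X] (π : ℕ → Measure X) [∀ n, IsProbabilityMeasure (π n)]
    (s : ℕ → ℝ) (hs : Tendsto s atTop atTop)
    (I : X → EReal) (hLDP : SatisfiesLDP π s I) (hgood : GoodRate I) :
    ∀ b : ℝ, 0 < b → ∃ K : Set X, IsCompact K ∧
      limsup (fun n => (((s n)⁻¹ : ℝ) : EReal) * ENNReal.log (π n Kᶜ)) atTop ≤
        ((-b : ℝ) : EReal) := by
  intro b _
  let := TopologicalSpace.upgradeIsCompletelyMetrizable X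
  have hcover : ∀ m : ℕ, ∃ t : Finset X, ∀ n, π n (⋃ y ∈ t, closedBall y (1 / (m + 1)))ᶜ
      ≤ ENNReal.ofReal (Real.exp (s n * -(b + m + 1))) := by
    intro m
    have hr : (0 : ℝ) < 1 / (m + 1) := by positivity
    obtain ⟨t, ht⟩ :=
      hLDP.upperBound.exists_finset_eventually_measure_compl_le hs hgood hr (b + m + 1)
    exact exists_finset_forall_measure_compl_biUnion_closedBall_le π hr
      (fun _ => ENNReal.ofReal_pos.2 (Real.exp_pos _)) ht
  choose T hT using hcover
  refine ⟨_, isCompact_iInter_biUnion_closedBall T tendsto_one_div_add_atTop_nhds_zero_nat, ?_⟩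
  refine limsup_le_of_eventually_le_ofReal_exp hs ?_
  filter_upwards [hs.eventually_ge_atTop 1] with n hsn
  calc π n (⋂ m, ⋃ y ∈ T m, closedBall y (1 / (m + 1)))ᶜ
      ≤ ∑' m : ℕ, π n (⋃ y ∈ T m, closedBall y (1 / (m + 1)))ᶜ := by
        rw [compl_iInter]; exact measure_iUnion_le _
    _ ≤ ∑' m : ℕ, ENNReal.ofReal (Real.exp (s n * -(b + m + 1))) :=
        ENNReal.tsum_le_tsum fun m => hT m n
    _ ≤ ENNReal.ofReal (Real.exp (s n * -b)) := tsum_ofReal_exp_le hsn b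
end

section
/- Let F be a continuous distribution function with F(x) < 1 for all x, and set H(x) = −log(1 − F(x)). Assume H is regularly varying at ∞ with index α > 0, and let hₙ satisfy H(hₙ) = log n. Then for every fixed z > 1 and every 0 < R < z − 1, with Zₙ = max{W₁,…,Wₙ} for i.i.d. Wᵢ with distribution F: lim_{n→∞} (1/log n) · log P( Zₙ / hₙ ≥ z ) exists and equals −(z^α − 1). -/
open MeasureTheory Set Filter

/-! With `p = 1 - F t`, independence gives `P (Zₙ ≥ t) = 1 - (1 - p)ⁿ`, and the elementary bounds
`n p / 2 ≤ 1 - (1 - p)ⁿ ≤ n p` (the lower one once `n p ≤ 1`) make `log P (Zₙ ≥ t)` equal to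
`log (n p)` up to a bounded error. For `t = z hₙ` we have `log (n p) = log n - H (z hₙ)`, and
`H (z hₙ) / log n = H (z hₙ) / H hₙ → z ^ α` by regular variation, because `hₙ → ∞` by monotonicity
of `H`. Since `z ^ α > 1` this also forces `n p → 0`, so the lower bound applies eventually. -/

open ProbabilityTheory Topology

lemma one_sub_one_sub_pow_le {p : ℝ} (hp : p ≤ 2) (n : ℕ) : 1 - (1 - p) ^ n ≤ n * p := by
  have := one_add_mul_le_pow (a := -p) (by linarith) n
  rw [← sub_eq_add_neg] at this
  linarith

lemma one_sub_pow_mul_one_add_mul_le_one {p : ℝ} (hp₀ : 0 ≤ p) (hp₁ : p ≤ 1) (n : ℕ) :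
    (1 - p) ^ n * (1 + n * p) ≤ 1 :=
  calc (1 - p) ^ n * (1 + n * p) ≤ (1 - p) ^ n * (1 + p) ^ n :=
        mul_le_mul_of_nonneg_left (one_add_mul_le_pow (by linarith) n) (pow_nonneg (by linarith) n)
    _ = (1 - p ^ 2) ^ n := by rw [← mul_pow]; ring
    _ ≤ 1 := pow_le_one₀ (by nlinarith) (by nlinarith)

lemma half_mul_le_one_sub_one_sub_pow {p : ℝ} (hp : 0 ≤ p) {n : ℕ} (hnp : n * p ≤ 1) :
    n * p / 2 ≤ 1 - (1 - p) ^ n := by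
  rcases n.eq_zero_or_pos with rfl | hn
  · simp
  have hp₁ : p ≤ 1 := by
    have : (1 : ℝ) ≤ n := by exact_mod_cast hn
    nlinarith
  have hprod := one_sub_pow_mul_one_add_mul_le_one hp hp₁ n
  have hpow : (1 - p) ^ n ≤ 1 := pow_le_one₀ (by linarith) (by linarith)
  nlinarith [mul_nonneg (sub_nonneg.2 hpow) (sub_nonneg.2 hnp)]

lemma tendsto_log_div_of_le_of_le {ι : Type*} {l : Filter ι} {a b ℓ : ι → ℝ} {c L : ℝ}
    (hc : 0 < c) (hℓ : Tendsto ℓ l atTop) (hb : ∀ᶠ i in l, 0 < b i)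
    (hlow : ∀ᶠ i in l, c * b i ≤ a i) (hup : ∀ᶠ i in l, a i ≤ b i)
    (hlim : Tendsto (fun i => Real.log (b i) / ℓ i) l (𝓝 L)) :
    Tendsto (fun i => Real.log (a i) / ℓ i) l (𝓝 L) := by
  have hlim' : Tendsto (fun i => Real.log c / ℓ i + Real.log (b i) / ℓ i) l (𝓝 L) := by
    simpa using (tendsto_const_nhds.div_atTop hℓ).add hlim
  refine tendsto_of_tendsto_of_tendsto_of_le_of_le' hlim' hlim ?_ ?_ <;>
    filter_upwards [hb, hlow, hup, hℓ.eventually_gt_atTop 0] with i hbi hlowi hupi hℓi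
  · rw [← add_div, ← Real.log_mul hc.ne' hbi.ne']
    gcongr
  · gcongr
    exact (mul_pos hc hbi).trans_le hlowi

lemma tendsto_zero_of_tendsto_log_div {ι : Type*} {l : Filter ι} {b ℓ : ι → ℝ} {L : ℝ}
    (hL : L < 0) (hℓ : Tendsto ℓ l atTop) (hb : ∀ᶠ i in l, 0 < b i)
    (hlim : Tendsto (fun i => Real.log (b i) / ℓ i) l (𝓝 L)) :
    Tendsto b l (𝓝 0) := by
  have hlog : Tendsto (fun i => Real.log (b i)) l atBot := by
    refine (hℓ.atTop_mul_neg hL hlim).congr' ?_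
    filter_upwards [hℓ.eventually_gt_atTop 0] with i hi
    field_simp
  refine (Real.tendsto_exp_atBot.comp hlog).congr' ?_
  filter_upwards [hb] with i hi
  exact Real.exp_log hi

lemma tendsto_log_one_sub_one_sub_pow_div_log {p : ℕ → ℝ} {L : ℝ} (hp : ∀ n, 0 < p n)
    (hL : L < 0) (hrate : Tendsto (fun n : ℕ => Real.log (n * p n) / Real.log n) atTop (𝓝 L)) :
    Tendsto (fun n : ℕ => Real.log (1 - (1 - p n) ^ n) / Real.log n) atTop (𝓝 L) := by
  have hlog : Tendsto (fun n : ℕ => Real.log n) atTop atTop :=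
    Real.tendsto_log_atTop.comp tendsto_natCast_atTop_atTop
  have hnp_pos : ∀ᶠ n : ℕ in atTop, 0 < n * p n := by
    filter_upwards [eventually_ge_atTop 1] with n hn
    exact mul_pos (by exact_mod_cast hn) (hp n)
  have hnp_le : ∀ᶠ n : ℕ in atTop, n * p n ≤ 1 :=
    (tendsto_zero_of_tendsto_log_div hL hlog hnp_pos hrate).eventually_le_const one_pos
  refine tendsto_log_div_of_le_of_le (half_pos one_pos) hlog hnp_pos ?_ ?_ hrate
  · filter_upwards [hnp_le] with n hn
    linarith [half_mul_le_one_sub_one_sub_pow (hp n).le hn]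
  · filter_upwards [hnp_le, eventually_ge_atTop 1] with n hn hn₁
    refine one_sub_one_sub_pow_le ?_ n
    linarith [le_mul_of_one_le_left (hp n).le (Nat.one_le_cast.2 hn₁)]

lemma Monotone.tendsto_atTop_of_tendsto_comp {ι α β : Type*} [LinearOrder α] [Preorder β]
    [NoMaxOrder β] {l : Filter ι} {H : α → β} (hH : Monotone H) {h : ι → α}
    (hlim : Tendsto (H ∘ h) l atTop) : Tendsto h l atTop := by
  refine tendsto_atTop.2 fun M => ?_
  filter_upwards [hlim.eventually_gt_atTop (H M)] with i hi
  exact (hH.reflect_lt hi).le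

lemma tendsto_comp_mul_div_log {H : ℝ → ℝ} (hH : Monotone H) {h : ℕ → ℝ}
    (hh : ∀ᶠ n in atTop, H (h n) = Real.log n) {z c : ℝ}
    (hreg : Tendsto (fun y => H (z * y) / H y) atTop (𝓝 c)) :
    Tendsto (fun n : ℕ => H (z * h n) / Real.log n) atTop (𝓝 c) := by
  have hHh : Tendsto (H ∘ h) atTop atTop :=
    (Real.tendsto_log_atTop.comp tendsto_natCast_atTop_atTop).congr' (hh.mono fun _ hn => hn.symm)
  refine (hreg.comp (hH.tendsto_atTop_of_tendsto_comp hHh)).congr' ?_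
  filter_upwards [hh] with n hn
  simp only [Function.comp_apply, hn]

lemma tendsto_log_mul_exp_neg_div_log {q : ℕ → ℝ} {c : ℝ}
    (hq : Tendsto (fun n : ℕ => q n / Real.log n) atTop (𝓝 c)) :
    Tendsto (fun n : ℕ => Real.log (n * Real.exp (-q n)) / Real.log n) atTop (𝓝 (1 - c)) := by
  refine (tendsto_const_nhds.sub hq).congr' ?_
  filter_upwards [eventually_gt_atTop 1] with n hn
  have hlog : Real.log n ≠ 0 := (Real.log_pos (by exact_mod_cast hn)).ne'
  rw [Real.log_mul (by positivity) (Real.exp_pos _).ne', Real.log_exp]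
  field_simp
  ring

lemma monotone_neg_log_one_sub {F : ℝ → ℝ} (hF : Monotone F) (hF_lt : ∀ x, F x < 1) :
    Monotone fun x => -Real.log (1 - F x) := fun a b hab =>
  neg_le_neg (Real.log_le_log (sub_pos.2 (hF_lt b)) (by linarith [hF hab]))

lemma setOf_maxFirst_lt {Ω : Type*} (W : ℕ → Ω → ℝ) (t : ℝ) (n : ℕ) :
    {ω | maxFirst W (n + 1) ω < t} = ⋂ i ∈ Finset.range (n + 1), W i ⁻¹' Iio t := by
  induction n with
  | zero => ext; simp [maxFirst]
  | succ n ih =>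
    rw [Finset.range_add_one, Finset.set_biInter_insert, ← ih, inter_comm]
    ext ω
    simp [maxFirst]

lemma measure_maxFirst_lt {Ω : Type*} [MeasurableSpace Ω] {P : Measure Ω} {W : ℕ → Ω → ℝ}
    {μ : Measure ℝ} (hmeas : ∀ i, Measurable (W i)) (hindep : iIndepFun W P)
    (hdist : ∀ i, P.map (W i) = μ) (t : ℝ) (n : ℕ) :
    P {ω | maxFirst W (n + 1) ω < t} = μ (Iio t) ^ (n + 1) := by
  have hlaw : ∀ i, P (W i ⁻¹' Iio t) = μ (Iio t) := fun i => by
    rw [← hdist i, Measure.map_apply (hmeas i) measurableSet_Iio]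
  rw [setOf_maxFirst_lt, hindep.measure_inter_preimage_eq_mul _ fun _ _ => measurableSet_Iio]
  simp [hlaw]

lemma measureReal_le_maxFirst {Ω : Type*} [MeasurableSpace Ω] {P : Measure Ω}
    [IsProbabilityMeasure P] {W : ℕ → Ω → ℝ} {μ : Measure ℝ} (hmeas : ∀ i, Measurable (W i))
    (hindep : iIndepFun W P) (hdist : ∀ i, P.map (W i) = μ) {t : ℝ} (ht : μ {t} = 0) (n : ℕ) :
    P.real {ω | t ≤ maxFirst W (n + 1) ω} = 1 - μ.real (Iic t) ^ (n + 1) := by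
  have hmeas_lt : MeasurableSet {ω | maxFirst W (n + 1) ω < t} := by
    rw [setOf_maxFirst_lt]
    exact .biInter (Finset.countable_toSet _) fun i _ => hmeas i measurableSet_Iio
  have hcompl : {ω | t ≤ maxFirst W (n + 1) ω} = {ω | maxFirst W (n + 1) ω < t}ᶜ := by
    ext; simp
  rw [hcompl, probReal_compl_eq_one_sub hmeas_lt, measureReal_def,
    measure_maxFirst_lt hmeas hindep hdist, measure_congr (Iio_ae_eq_Iic' ht),
    ENNReal.toReal_pow, measureReal_def]

lemma measure_singleton_eq_zero_of_continuousAt_cdf {μ : Measure ℝ} [IsProbabilityMeasure μ]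
    {t : ℝ} (ht : ContinuousAt (cdf μ) t) : μ {t} = 0 := by
  rw [← measure_cdf μ, StieltjesFunction.measure_singleton,
    ht.continuousWithinAt.leftLim_eq, sub_self, ENNReal.ofReal_zero]

theorem stmt_18 {Ω : Type*} [MeasurableSpace Ω] (P : Measure Ω) [IsProbabilityMeasure P]
    (W : ℕ → Ω → ℝ) (μ : Measure ℝ) [IsProbabilityMeasure μ]
    (hmeas : ∀ i, Measurable (W i))
    (hindep : ProbabilityTheory.iIndepFun W P)
    (hdist : ∀ i, Measure.map (W i) P = μ)
    (F : ℝ → ℝ) (hF : ∀ x, F x = (μ (Iic x)).toReal)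
    (hF_cont : Continuous F) (hF_lt : ∀ x, F x < 1)
    (H : ℝ → ℝ) (hH : ∀ x, H x = -Real.log (1 - F x))
    (α : ℝ) (hα : 0 < α)
    (hreg : ∀ x : ℝ, 0 < x → Tendsto (fun y : ℝ => H (x * y) / H y) atTop (nhds (x ^ α)))
    (h : ℕ → ℝ) (hh_pos : ∀ n : ℕ, 2 ≤ n → 0 < h n)
    (hh : ∀ n : ℕ, 2 ≤ n → H (h n) = Real.log n)
    (z : ℝ) (hz : 1 < z) :
    Tendsto (fun n : ℕ =>
        Real.log (P {ω | z ≤ maxFirst W n ω / h n}).toReal / Real.log n)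
      atTop (nhds (-(z ^ α - 1))) := by
  have hFcdf : F = cdf μ := funext fun x => (hF x).trans (cdf_eq_real μ x).symm
  have hH_exp : ∀ x, 1 - F x = Real.exp (-H x) := fun x => by
    rw [hH, neg_neg, Real.exp_log (sub_pos.2 (hF_lt x))]
  have hH_mono : Monotone H := funext hH ▸ monotone_neg_log_one_sub (hFcdf ▸ monotone_cdf μ) hF_lt
  have hHz := tendsto_comp_mul_div_log hH_mono ((eventually_ge_atTop 2).mono hh)
    (hreg z (by linarith))
  rw [neg_sub]
  refine (tendsto_log_one_sub_one_sub_pow_div_log (fun n => Real.exp_pos _)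
    (by linarith [Real.one_lt_rpow hz hα]) (tendsto_log_mul_exp_neg_div_log hHz)).congr' ?_
  filter_upwards [eventually_ge_atTop 2] with n hn
  obtain ⟨m, rfl⟩ : ∃ m, n = m + 1 := ⟨n - 1, by omega⟩
  simp_rw [le_div_iff₀ (hh_pos _ hn), ← hH_exp, sub_sub_cancel, hF, ← measureReal_def]
  rw [measureReal_le_maxFirst hmeas hindep hdist
      (measure_singleton_eq_zero_of_continuousAt_cdf (hFcdf ▸ hF_cont.continuousAt)) m]
end
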